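/- arXiv:1902.02564 — 2 statements merged into one kernel-verified Lean document; each statement's English description precedes it below -/
import Mathlib

section
/- Let α ∈ (1/2, 1), t > 0, and let y : [0,t] → [0,∞) be measurable with ∫₀ᵗ ω_{2α−1}(t−s)·y(s)² ds < ∞. Then (∫₀ᵗ ω_α(t−s)·ω_α(s)·y(s) ds)² ≤ (Γ(2α−1)·t^{2α−1}/((2α−1)·Γ(α)⁴))·∫₀ᵗ ω_{2α−1}(t−s)·y(s)² ds. -/
/-!
Split the integrand as `(ω_α(t-s) y(s)) · ω_α(s)` and apply Cauchy–Schwarz. For `α > 1/2` both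
squares are multiples of `ω_{2α-1}`, since `ω_α² = Γ(2α-1)/Γ(α)² · ω_{2α-1}`, and
`∫₀ᵗ ω_{2α-1} = t^{2α-1}/((2α-1) Γ(2α-1))`.
-/

open MeasureTheory Set

/-- `ω β t = t^(β-1)/Γ(β)`. -/
noncomputable def omega (β t : ℝ) : ℝ := t ^ (β - 1) / Real.Gamma β

theorem sq_integral_mul_le_integral_sq_mul_integral_sq {X : Type*} [MeasurableSpace X]
    {μ : Measure X} {f g : X → ℝ} (hf : MemLp f 2 μ) (hg : MemLp g 2 μ) :
    (∫ x, f x * g x ∂μ) ^ 2 ≤ (∫ x, f x ^ 2 ∂μ) * ∫ x, g x ^ 2 ∂μ := by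
  have holder := integral_mul_norm_le_Lp_mul_Lq Real.HolderConjugate.two_two
    (by simpa using hf) (by simpa using hg)
  simp only [Real.norm_eq_abs, Real.rpow_two, sq_abs, ← Real.sqrt_eq_rpow] at holder
  calc (∫ x, f x * g x ∂μ) ^ 2 = ‖∫ x, f x * g x ∂μ‖ ^ 2 := by rw [Real.norm_eq_abs, sq_abs]
    _ ≤ (∫ x, |f x| * |g x| ∂μ) ^ 2 := by
        gcongr
        simpa only [Real.norm_eq_abs, abs_mul] using
          norm_integral_le_integral_norm (fun x => f x * g x)
    _ ≤ (√(∫ x, f x ^ 2 ∂μ) * √(∫ x, g x ^ 2 ∂μ)) ^ 2 := by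
        gcongr
    _ = (∫ x, f x ^ 2 ∂μ) * ∫ x, g x ^ 2 ∂μ := by
        rw [mul_pow, Real.sq_sqrt (integral_nonneg fun x => by positivity),
          Real.sq_sqrt (integral_nonneg fun x => by positivity)]

@[fun_prop]
theorem measurable_omega (β : ℝ) : Measurable (omega β) := by
  unfold omega; fun_prop

theorem omega_sq {β t : ℝ} (hβ : 1 / 2 < β) (ht : 0 ≤ t) :
    omega β t ^ 2 = Real.Gamma (2 * β - 1) / Real.Gamma β ^ 2 * omega (2 * β - 1) t := by
  have hΓ : 0 < Real.Gamma (2 * β - 1) := Real.Gamma_pos_of_pos (by linarith)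
  rw [omega, omega, div_pow, ← Real.rpow_mul_natCast ht, Nat.cast_ofNat,
    show (β - 1) * 2 = 2 * β - 1 - 1 by ring]
  field_simp

theorem integrableOn_omega {β : ℝ} (hβ : 0 < β) (t : ℝ) : IntegrableOn (omega β) (Ioc 0 t) :=
  ((intervalIntegral.intervalIntegrable_rpow' (by linarith : -1 < β - 1)).1).div_const _

theorem integral_omega {β t : ℝ} (hβ : 0 < β) (ht : 0 ≤ t) :
    ∫ s in Ioc 0 t, omega β s = t ^ β / (β * Real.Gamma β) := by
  simp only [omega]
  rw [integral_div, ← intervalIntegral.integral_of_le ht, integral_rpow (Or.inl (by linarith)),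
    Real.zero_rpow (by linarith), sub_zero, sub_add_cancel]
  field_simp

theorem weighted_cauchy_schwarz_omega_general
    (α t : ℝ) (hα : α ∈ Ioo (1/2 : ℝ) 1) (ht : 0 < t)
    (y : ℝ → ℝ) (hy : Measurable y)
    (hInt : IntegrableOn (fun s => omega (2 * α - 1) (t - s) * y s ^ 2) (Ioc 0 t)) :
    (∫ s in Ioc (0:ℝ) t, omega α (t - s) * omega α s * y s) ^ 2 ≤
      (Real.Gamma (2 * α - 1) * t ^ (2 * α - 1) / ((2 * α - 1) * Real.Gamma α ^ 4)) *
        ∫ s in Ioc (0:ℝ) t, omega (2 * α - 1) (t - s) * y s ^ 2 := by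
  have h2α : 0 < 2 * α - 1 := by linarith [hα.1]
  set c := Real.Gamma (2 * α - 1) / Real.Gamma α ^ 2 with hc
  have hF_sq : EqOn (fun s => (omega α (t - s) * y s) ^ 2)
      (fun s => c * (omega (2 * α - 1) (t - s) * y s ^ 2)) (Ioc 0 t) := fun s hs => by
    simp only [mul_pow, omega_sq hα.1 (sub_nonneg.2 hs.2), mul_assoc, hc]
  have hG_sq : EqOn (fun s => omega α s ^ 2) (fun s => c * omega (2 * α - 1) s) (Ioc 0 t) :=
    fun s hs => omega_sq hα.1 hs.1.le
  have hF : MemLp (fun s => omega α (t - s) * y s) 2 (volume.restrict (Ioc 0 t)) :=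
    (memLp_two_iff_integrable_sq (by fun_prop)).2 <|
      (integrableOn_congr_fun hF_sq measurableSet_Ioc).2 (hInt.const_mul c)
  have hG : MemLp (omega α) 2 (volume.restrict (Ioc 0 t)) :=
    (memLp_two_iff_integrable_sq (by fun_prop)).2 <|
      (integrableOn_congr_fun hG_sq measurableSet_Ioc).2 ((integrableOn_omega h2α t).const_mul c)
  calc (∫ s in Ioc 0 t, omega α (t - s) * omega α s * y s) ^ 2
      = (∫ s in Ioc 0 t, omega α (t - s) * y s * omega α s) ^ 2 := by simp only [mul_right_comm]
    _ ≤ (∫ s in Ioc 0 t, (omega α (t - s) * y s) ^ 2) * ∫ s in Ioc 0 t, omega α s ^ 2 :=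
        sq_integral_mul_le_integral_sq_mul_integral_sq hF hG
    _ = (c * ∫ s in Ioc 0 t, omega (2 * α - 1) (t - s) * y s ^ 2) *
          (c * (t ^ (2 * α - 1) / ((2 * α - 1) * Real.Gamma (2 * α - 1)))) := by
        rw [setIntegral_congr_fun measurableSet_Ioc hF_sq,
          setIntegral_congr_fun measurableSet_Ioc hG_sq, integral_const_mul, integral_const_mul,
          integral_omega h2α ht.le]
    _ = _ := by
        rw [hc]
        field_simp

/-- Weighted Cauchy--Schwarz estimate from the proof of Lemma 6.2:
`(∫₀ᵗ ω_α(t-s) ω_α(s) y(s) ds)² ≤ (Γ(2α-1) t^{2α-1}/((2α-1)Γ(α)⁴)) ∫₀ᵗ ω_{2α-1}(t-s) y(s)² ds`. -/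
theorem weighted_cauchy_schwarz_omega
    (α t : ℝ) (hα : α ∈ Ioo (1/2 : ℝ) 1) (ht : 0 < t)
    (y : ℝ → ℝ) (hy : Measurable y) (hy0 : ∀ s ∈ Icc (0:ℝ) t, 0 ≤ y s)
    (hInt : IntegrableOn (fun s => omega (2 * α - 1) (t - s) * y s ^ 2) (Ioc 0 t)) :
    (∫ s in Ioc (0:ℝ) t, omega α (t - s) * omega α s * y s) ^ 2 ≤
      (Real.Gamma (2 * α - 1) * t ^ (2 * α - 1) / ((2 * α - 1) * Real.Gamma α ^ 4)) *
        ∫ s in Ioc (0:ℝ) t, omega (2 * α - 1) (t - s) * y s ^ 2 :=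
  weighted_cauchy_schwarz_omega_general α t hα ht y hy hInt
end

section
/- Let X be a real Banach space, α ∈ (0,1), T > 0, and let w : [0,T] → X be continuous. Suppose J^α w and J^α(s ↦ s·w(s)) are differentiable at a point t ∈ (0,T). Then (d/dt) J^α(s ↦ s·w(s))(t) = t·(d/dt)(J^α w)(t) + (1−α)·(J^α w)(t). -/
open MeasureTheory Set

/-- Riemann--Liouville fractional integral `J^β w (t) = ∫₀ᵗ ω_β(t-s) w(s) ds`
with `ω_β(t) = t^(β-1)/Γ(β)`. -/
noncomputable def fracInt {X : Type*} [NormedAddCommGroup X] [NormedSpace ℝ X]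
    (β : ℝ) (w : ℝ → X) (t : ℝ) : X :=
  ∫ s in Ioc (0:ℝ) t, ((t - s) ^ (β - 1) / Real.Gamma β) • w s

open Filter Topology

/-!
Writing `s = t - (t - s)` and using `Γ(α + 1) = α Γ(α)` gives
`J^α(s w)(t) = t J^α w(t) - α J^(α+1) w(t)`, and Fubini gives
`J^(α+1) w(t) = ∫₀ᵗ J^α w`.
Differentiating the right-hand side by the product rule and the fundamental theorem of calculus
gives the identity; the continuity of `J^α w` at `t` that the latter needs comes from its
differentiability.
-/

lemma integrableOn_Ioc_sub_rpow {r a b : ℝ} (hr : -1 < r) :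
    IntegrableOn (fun s => (b - s) ^ r) (Ioc a b) := by
  rcases lt_or_ge b a with hba | hab
  · simp [Ioc_eq_empty_of_le hba.le]
  rw [← intervalIntegrable_iff_integrableOn_Ioc_of_le hab]
  simpa using
    ((intervalIntegral.intervalIntegrable_rpow' (a := 0) (b := b - a) hr).comp_sub_left b).symm

lemma integral_Ioc_sub_rpow {r a b : ℝ} (hr : -1 < r) (hab : a ≤ b) :
    ∫ s in Ioc a b, (b - s) ^ r = (b - a) ^ (r + 1) / (r + 1) := by
  rw [← intervalIntegral.integral_of_le hab,
    intervalIntegral.integral_comp_sub_left (fun x : ℝ => x ^ r) b, sub_self,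
    integral_rpow (Or.inl hr), Real.zero_rpow (by linarith), sub_zero]

lemma integral_Ioc_rpow_sub {r a b : ℝ} (hr : -1 < r) (hab : a ≤ b) :
    ∫ s in Ioc a b, (s - a) ^ r = (b - a) ^ (r + 1) / (r + 1) := by
  rw [← intervalIntegral.integral_of_le hab,
    intervalIntegral.integral_comp_sub_right (fun x : ℝ => x ^ r) a, sub_self,
    integral_rpow (Or.inl hr), Real.zero_rpow (by linarith), sub_zero]

lemma integral_Ioc_fracKernel {β τ : ℝ} (hβ : 0 < β) (hτ : 0 ≤ τ) :
    ∫ s in Ioc 0 τ, (τ - s) ^ (β - 1) / Real.Gamma β = τ ^ β / Real.Gamma (β + 1) := by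
  rw [integral_div, integral_Ioc_sub_rpow (by linarith) hτ, sub_zero, sub_add_cancel,
    Real.Gamma_add_one hβ.ne', div_div, mul_comm]

section

variable {X : Type*} [NormedAddCommGroup X] [NormedSpace ℝ X]

section Bounds

variable {β τ M : ℝ} {w : ℝ → X}

lemma norm_fracKernel_smul_le {s : ℝ} (hβ : 0 < β) (hs : s ≤ τ) (hw : ‖w s‖ ≤ M) :
    ‖((τ - s) ^ (β - 1) / Real.Gamma β) • w s‖ ≤
      (τ - s) ^ (β - 1) / Real.Gamma β * M := by
  have hk : 0 ≤ (τ - s) ^ (β - 1) / Real.Gamma β :=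
    div_nonneg (Real.rpow_nonneg (sub_nonneg.2 hs) _) (Real.Gamma_nonneg_of_nonneg hβ.le)
  rw [norm_smul, Real.norm_of_nonneg hk]
  exact mul_le_mul_of_nonneg_left hw hk

lemma integrableOn_fracKernel_smul (hβ : 0 < β)
    (hwm : AEStronglyMeasurable w (volume.restrict (Ioc 0 τ)))
    (hM : ∀ s ∈ Ioc 0 τ, ‖w s‖ ≤ M) :
    IntegrableOn (fun s => ((τ - s) ^ (β - 1) / Real.Gamma β) • w s) (Ioc 0 τ) := by
  have hk := (integrableOn_Ioc_sub_rpow (a := 0) (b := τ) (r := β - 1) (by linarith)).div_const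
    (Real.Gamma β)
  refine Integrable.mono' (hk.mul_const M) (hk.aestronglyMeasurable.smul hwm) ?_
  filter_upwards [ae_restrict_mem measurableSet_Ioc] with s hs
  exact norm_fracKernel_smul_le hβ hs.2 (hM s hs)

lemma integral_norm_fracKernel_smul_le (hβ : 0 < β) (hτ : 0 ≤ τ)
    (hM : ∀ s ∈ Ioc 0 τ, ‖w s‖ ≤ M) :
    ∫ s in Ioc 0 τ, ‖((τ - s) ^ (β - 1) / Real.Gamma β) • w s‖ ≤
      M * τ ^ β / Real.Gamma (β + 1) := by
  calc ∫ s in Ioc 0 τ, ‖((τ - s) ^ (β - 1) / Real.Gamma β) • w s‖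
      ≤ ∫ s in Ioc 0 τ, (τ - s) ^ (β - 1) / Real.Gamma β * M := by
        refine integral_mono_of_nonneg (ae_of_all _ fun _ => norm_nonneg _)
          (((integrableOn_Ioc_sub_rpow (by linarith)).div_const _).mul_const M) ?_
        filter_upwards [ae_restrict_mem measurableSet_Ioc] with s hs
        exact norm_fracKernel_smul_le hβ hs.2 (hM s hs)
    _ = M * τ ^ β / Real.Gamma (β + 1) := by
        rw [integral_mul_const, integral_Ioc_fracKernel hβ hτ]; ring

lemma ContinuousOn.integrableOn_fracKernel_smul (hβ : 0 < β) (hw : ContinuousOn w (Icc 0 τ)) :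
    IntegrableOn (fun s => ((τ - s) ^ (β - 1) / Real.Gamma β) • w s) (Ioc 0 τ) := by
  obtain ⟨M, hM⟩ := isCompact_Icc.exists_bound_of_continuousOn hw
  exact _root_.integrableOn_fracKernel_smul hβ
    ((hw.mono Ioc_subset_Icc_self).aestronglyMeasurable measurableSet_Ioc)
    fun s hs => hM s (Ioc_subset_Icc_self hs)

end Bounds

variable {α τ : ℝ} {w : ℝ → X}

lemma fracInt_id_smul_eq (hα : 0 < α) (hw : ContinuousOn w (Icc 0 τ)) :
    fracInt α (fun s => s • w s) τ = τ • fracInt α w τ - α • fracInt (α + 1) w τ := by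
  have hΓ : Real.Gamma (α + 1) = α * Real.Gamma α := Real.Gamma_add_one hα.ne'
  have h1 : ∀ s ∈ Ioc 0 τ, ((τ - s) ^ (α - 1) / Real.Gamma α) • s • w s =
      τ • (((τ - s) ^ (α - 1) / Real.Gamma α) • w s) -
        α • (((τ - s) ^ (α + 1 - 1) / Real.Gamma (α + 1)) • w s) := by
    intro s hs
    have hpow : (τ - s) ^ α = (τ - s) ^ (α - 1) * (τ - s) := by
      simpa using Real.rpow_add_one' (sub_nonneg.2 hs.2) (y := α - 1) (by simpa using hα.ne')
    rw [add_sub_cancel_right, hpow, hΓ, smul_smul, smul_smul, smul_smul, ← sub_smul]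
    congr 1
    field_simp [hα.ne', (Real.Gamma_pos_of_pos hα).ne']
    ring
  unfold fracInt
  rw [setIntegral_congr_fun measurableSet_Ioc h1, integral_sub, integral_smul, integral_smul]
  · exact (hw.integrableOn_fracKernel_smul hα).smul τ
  · exact (hw.integrableOn_fracKernel_smul (by linarith)).smul α

noncomputable def fracIntKernel (α : ℝ) (w : ℝ → X) (r s : ℝ) : X :=
  (Ioc 0 r).indicator (fun s => ((r - s) ^ (α - 1) / Real.Gamma α) • w s) s

lemma setIntegral_fracIntKernel_right {r : ℝ} (hr : r ≤ τ) :
    ∫ s in Ioc 0 τ, fracIntKernel α w r s = fracInt α w r := by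
  unfold fracIntKernel fracInt
  rw [setIntegral_indicator measurableSet_Ioc, inter_eq_right.2 (Ioc_subset_Ioc_right hr)]

lemma setIntegral_fracIntKernel_left [CompleteSpace X] (hα : 0 < α) {s : ℝ}
    (hs : s ∈ Ioc 0 τ) :
    ∫ r in Ioc 0 τ, fracIntKernel α w r s =
      ((τ - s) ^ (α + 1 - 1) / Real.Gamma (α + 1)) • w s := by
  have hK : ∀ r, fracIntKernel α w r s =
      (Ici s).indicator (fun r => ((r - s) ^ (α - 1) / Real.Gamma α) • w s) r := by
    intro r
    simp [fracIntKernel, indicator_apply, hs.1]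
  have hset : Ioc 0 τ ∩ Ici s = Icc s τ := by
    ext r
    simp only [mem_inter_iff, mem_Ioc, mem_Ici, mem_Icc]
    constructor
    · rintro ⟨⟨-, hrτ⟩, hsr⟩; exact ⟨hsr, hrτ⟩
    · rintro ⟨hsr, hrτ⟩; exact ⟨⟨hs.1.trans_le hsr, hrτ⟩, hsr⟩
  simp_rw [hK]
  rw [setIntegral_indicator measurableSet_Ici, hset, integral_Icc_eq_integral_Ioc,
    integral_smul_const, integral_div, integral_Ioc_rpow_sub (by linarith) hs.2, sub_add_cancel,
    add_sub_cancel_right, Real.Gamma_add_one hα.ne', div_div, mul_comm]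

lemma integrable_fracIntKernel (hα : 0 < α) (hw : ContinuousOn w (Icc 0 τ)) :
    Integrable (Function.uncurry (fracIntKernel α w))
      ((volume.restrict (Ioc 0 τ)).prod (volume.restrict (Ioc 0 τ))) := by
  obtain ⟨M, hM⟩ := isCompact_Icc.exists_bound_of_continuousOn hw
  have hwm : AEStronglyMeasurable w (volume.restrict (Ioc 0 τ)) :=
    (hw.mono Ioc_subset_Icc_self).aestronglyMeasurable measurableSet_Ioc
  have hKm : AEStronglyMeasurable (Function.uncurry (fracIntKernel α w))
      ((volume.restrict (Ioc 0 τ)).prod (volume.restrict (Ioc 0 τ))) := by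
    have hK : Function.uncurry (fracIntKernel α w) = {p : ℝ × ℝ | p.2 ∈ Ioc 0 p.1}.indicator
        fun p => ((p.1 - p.2) ^ (α - 1) / Real.Gamma α) • w p.2 := by
      ext ⟨r, s⟩
      simp [fracIntKernel, indicator_apply]
    rw [hK]
    refine (AEStronglyMeasurable.smul ?_ hwm.comp_snd).indicator ?_
    · exact (((measurable_fst.sub measurable_snd).pow_const _).div_const _).aestronglyMeasurable
    · exact (measurableSet_lt measurable_const measurable_snd).inter
        (measurableSet_le measurable_snd measurable_fst)
  refine (integrable_prod_iff hKm).2 ⟨?_, ?_⟩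
  · filter_upwards [ae_restrict_mem measurableSet_Ioc] with r hr
    change Integrable ((Ioc 0 r).indicator fun s => ((r - s) ^ (α - 1) / Real.Gamma α) • w s) _
    rw [integrable_indicator_iff measurableSet_Ioc, IntegrableOn,
      Measure.restrict_restrict measurableSet_Ioc, inter_eq_left.2 (Ioc_subset_Ioc_right hr.2)]
    exact (hw.mono (Icc_subset_Icc_right hr.2)).integrableOn_fracKernel_smul hα
  · refine Integrable.mono' (integrableOn_const measure_Ioc_lt_top.ne
      (C := M * τ ^ α / Real.Gamma (α + 1))) hKm.norm.integral_prod_right' ?_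
    filter_upwards [ae_restrict_mem measurableSet_Ioc] with r hr
    have hM0 : 0 ≤ M := (norm_nonneg _).trans (hM r (Ioc_subset_Icc_self hr))
    rw [Real.norm_of_nonneg (integral_nonneg fun _ => norm_nonneg _)]
    calc ∫ s in Ioc 0 τ, ‖fracIntKernel α w r s‖
        = ∫ s in Ioc 0 r, ‖((r - s) ^ (α - 1) / Real.Gamma α) • w s‖ := by
          simp_rw [fracIntKernel, norm_indicator_eq_indicator_norm]
          rw [setIntegral_indicator measurableSet_Ioc,
            inter_eq_right.2 (Ioc_subset_Ioc_right hr.2)]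
      _ ≤ M * r ^ α / Real.Gamma (α + 1) :=
          integral_norm_fracKernel_smul_le hα hr.1.le
            fun s hs => hM s ⟨hs.1.le, hs.2.trans hr.2⟩
      _ ≤ M * τ ^ α / Real.Gamma (α + 1) := by
          gcongr
          exacts [hr.1.le, hr.2]

lemma integrableOn_fracInt (hα : 0 < α) (hw : ContinuousOn w (Icc 0 τ)) :
    IntegrableOn (fracInt α w) (Ioc 0 τ) := by
  refine (integrable_fracIntKernel hα hw).integral_prod_left.congr ?_
  filter_upwards [ae_restrict_mem measurableSet_Ioc] with r hr
  exact setIntegral_fracIntKernel_right hr.2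

lemma fracInt_add_one_eq_integral [CompleteSpace X] (hα : 0 < α)
    (hw : ContinuousOn w (Icc 0 τ)) :
    fracInt (α + 1) w τ = ∫ r in Ioc 0 τ, fracInt α w r := calc
  fracInt (α + 1) w τ = ∫ s in Ioc 0 τ, ∫ r in Ioc 0 τ, fracIntKernel α w r s :=
    (setIntegral_congr_fun measurableSet_Ioc fun _ hs => setIntegral_fracIntKernel_left hα hs).symm
  _ = ∫ r in Ioc 0 τ, ∫ s in Ioc 0 τ, fracIntKernel α w r s :=
    (integral_integral_swap (integrable_fracIntKernel hα hw)).symm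
  _ = ∫ r in Ioc 0 τ, fracInt α w r :=
    setIntegral_congr_fun measurableSet_Ioc fun _ hr => setIntegral_fracIntKernel_right hr.2

end

theorem deriv_fracInt_mul_eq_general
    {X : Type*} [NormedAddCommGroup X] [NormedSpace ℝ X] [CompleteSpace X]
    (α T : ℝ) (hα : α ∈ Ioo (0:ℝ) 1)
    (w : ℝ → X) (hw : ContinuousOn w (Icc 0 T))
    (t : ℝ) (ht : t ∈ Ioo (0:ℝ) T)
    (D D' : X)
    (hD : HasDerivAt (fracInt α w) D t)
    (hD' : HasDerivAt (fracInt α (fun s => s • w s)) D' t) :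
    D' = t • D + (1 - α) • fracInt α w t := by
  obtain ⟨τ, htτ, hτT⟩ := exists_between ht.2
  have hwτ : ContinuousOn w (Icc 0 τ) := hw.mono (Icc_subset_Icc_right hτT.le)
  have hG : IntegrableOn (fracInt α w) (Ioc 0 τ) := integrableOn_fracInt hα.1 hwτ
  have hFTC : HasDerivAt (fun u => ∫ r in (0:ℝ)..u, fracInt α w r) (fracInt α w t) t :=
    intervalIntegral.integral_hasDerivAt_right
      ((intervalIntegrable_iff_integrableOn_Ioc_of_le ht.1.le).2
        (hG.mono_set (Ioc_subset_Ioc_right htτ.le)))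
      (AEStronglyMeasurable.stronglyMeasurableAtFilter_of_mem hG.aestronglyMeasurable
        (Ioc_mem_nhds ht.1 htτ))
      hD.continuousAt
  have hEq : fracInt α (fun s => s • w s) =ᶠ[𝓝 t]
      fun u => u • fracInt α w u - α • ∫ r in (0:ℝ)..u, fracInt α w r := by
    filter_upwards [Ioo_mem_nhds ht.1 htτ] with u hu
    have hwu : ContinuousOn w (Icc 0 u) := hwτ.mono (Icc_subset_Icc_right hu.2.le)
    rw [fracInt_id_smul_eq hα.1 hwu, fracInt_add_one_eq_integral hα.1 hwu,
      intervalIntegral.integral_of_le hu.1.le]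
  have hD'' := ((hasDerivAt_id' t).smul hD).sub (hFTC.const_smul α)
  rw [hD'.unique (hD''.congr_of_eventuallyEq hEq)]
  module

/-- The identity (eq:uz): if `J^α w` and `J^α(s ↦ s w(s))` are differentiable at
`t ∈ (0,T)`, then `(d/dt) J^α(s ↦ s w(s))(t) = t (d/dt)(J^α w)(t) + (1-α)(J^α w)(t)`. -/
theorem deriv_fracInt_mul_eq
    {X : Type*} [NormedAddCommGroup X] [NormedSpace ℝ X] [CompleteSpace X]
    (α T : ℝ) (hα : α ∈ Ioo (0:ℝ) 1) (hT : 0 < T)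
    (w : ℝ → X) (hw : ContinuousOn w (Icc 0 T))
    (t : ℝ) (ht : t ∈ Ioo (0:ℝ) T)
    (D D' : X)
    (hD : HasDerivAt (fracInt α w) D t)
    (hD' : HasDerivAt (fracInt α (fun s => s • w s)) D' t) :
    D' = t • D + (1 - α) • fracInt α w t :=
  deriv_fracInt_mul_eq_general α T hα w hw t ht D D' hD hD'
end
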